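/- Let G be a (possibly infinite) graph, let s, t ∈ V(G) be distinct, and let 𝒫 and 𝒬 be systems of pairwise edge-disjoint st-paths. Then there exists a system ℛ of pairwise edge-disjoint st-paths such that the set of first edges (edges at s) of ℛ contains the set of first edges of 𝒫 and the set of last edges (edges at t) of ℛ contains the set of last edges of 𝒬. -/

import Mathlib

/-!
Common definitions: multigraphs (parallel edges allowed, no loops), walks,
paths, cuts, waves and related notions used in the statements below.
-/

universe u v

/-- A multigraph with vertex type `V` and edge type `E`: every edge is assigned
an unordered pair of *distinct* end-vertices (parallel edges allowed, no loops). -/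
structure Multigraph (V : Type u) (E : Type v) : Type (max u v) where
  inc : E → Sym2 V
  not_isDiag : ∀ e, ¬ (inc e).IsDiag

namespace Multigraph

variable {V : Type u} {E : Type v}

/-- Walks in a multigraph, recorded together with the edges they traverse. -/
inductive Walk (G : Multigraph V E) : V → V → Type (max u v)
  | nil (v : V) : Walk G v v
  | cons {u v w : V} (e : E) (he : G.inc e = s(u, v)) (p : Walk G v w) : Walk G u w

namespace Walk

variable {G : Multigraph V E}

/-- The list of vertices visited by a walk. -/
def support : ∀ {u w : V}, G.Walk u w → List V
  | _, _, .nil v => [v]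
  | u, _, .cons _ _ p => u :: p.support

/-- The list of edges traversed by a walk. -/
def edges : ∀ {u w : V}, G.Walk u w → List E
  | _, _, .nil _ => []
  | _, _, .cons e _ p => e :: p.edges

end Walk

/-- `δ_G(v)`: the set of edges incident with the vertex `v`. -/
def inci (G : Multigraph V E) (v : V) : Set E := {e | v ∈ G.inc e}

/-- `δ_G(X)`: the set of edges with exactly one end-vertex in `X`. -/
def cut (G : Multigraph V E) (X : Set V) : Set E :=
  {e | ∃ x y, G.inc e = s(x, y) ∧ x ∈ X ∧ y ∉ X}

/-- Connectedness of a multigraph. -/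
def Connected (G : Multigraph V E) : Prop := ∀ u v : V, Nonempty (G.Walk u v)

/-- A `T`-path: a path connecting two distinct vertices of `T`
with no internal vertex in `T`. -/
structure TPath (G : Multigraph V E) (T : Set V) : Type (max u v) where
  first : V
  last : V
  walk : G.Walk first last
  first_mem : first ∈ T
  last_mem : last ∈ T
  ne : first ≠ last
  support_nodup : walk.support.Nodup
  internal : ∀ x ∈ walk.support, x ∈ T → x = first ∨ x = last

/-- A system of pairwise edge-disjoint `T`-paths. -/
def TPathDisjoint (G : Multigraph V E) {T : Set V} (P : Set (G.TPath T)) : Prop :=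
  ∀ p ∈ P, ∀ q ∈ P, p ≠ q → ∀ e, e ∈ p.walk.edges → e ∉ q.walk.edges

/-- An `st`-path: a path from `s` to `t` (no internal vertex is `s` or `t`,
which is automatic as the vertices of a path are distinct). -/
structure STPath (G : Multigraph V E) (s t : V) : Type (max u v) where
  walk : G.Walk s t
  support_nodup : walk.support.Nodup

/-- A system of pairwise edge-disjoint `st`-paths. -/
def STPathDisjoint (G : Multigraph V E) {s t : V} (P : Set (G.STPath s t)) : Prop :=
  ∀ p ∈ P, ∀ q ∈ P, p ≠ q → ∀ e, e ∈ p.walk.edges → e ∉ q.walk.edges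

/-- A nontrivial path starting at `s`. -/
structure SPath (G : Multigraph V E) (s : V) : Type (max u v) where
  last : V
  walk : G.Walk s last
  support_nodup : walk.support.Nodup
  edges_ne_nil : walk.edges ≠ []

/-- A system of pairwise edge-disjoint paths starting at `s`. -/
def SPathDisjoint (G : Multigraph V E) {s : V} (W : Set (G.SPath s)) : Prop :=
  ∀ p ∈ W, ∀ q ∈ W, p ≠ q → ∀ e, e ∈ p.walk.edges → e ∉ q.walk.edges

/-- The set of last edges of a system of paths starting at `s`. -/
def lastEdges (G : Multigraph V E) {s : V} (W : Set (G.SPath s)) : Set E :=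
  {e | ∃ p ∈ W, p.walk.edges.getLast? = some e}

/-- `C` is a cut separating `A` from `B`. -/
def SepCut (G : Multigraph V E) (A B : Set V) (C : Set E) : Prop :=
  ∃ X : Set V, A ⊆ X ∧ (∀ b ∈ B, b ∉ X) ∧ C = G.cut X

/-- `C` is a `⊆`-minimal cut separating `A` from `B`. -/
def IsMinSepCut (G : Multigraph V E) (A B : Set V) (C : Set E) : Prop :=
  G.SepCut A B C ∧ ∀ D : Set E, G.SepCut A B D → D ⊆ C → D = C

/-- An `s`-`B`-wave: a system of pairwise edge-disjoint paths starting at `s`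
whose set of last edges is a `⊆`-minimal cut separating `s` from `B`. -/
def IsWave (G : Multigraph V E) (s : V) (B : Set V) (W : Set (G.SPath s)) : Prop :=
  G.SPathDisjoint W ∧ G.IsMinSepCut {s} B (G.lastEdges W)

/-- An Erdős–Menger `st`-cut: an `st`-cut which is orthogonal to some system of
pairwise edge-disjoint `st`-paths, i.e. it consists of exactly one edge chosen
from each path of the system. -/
def IsEMCut (G : Multigraph V E) (s t : V) (C : Set E) : Prop :=
  (∃ X : Set V, s ∈ X ∧ t ∉ X ∧ C = G.cut X) ∧
  ∃ P : Set (G.STPath s t), G.STPathDisjoint P ∧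
    (∀ p ∈ P, ∃! e, e ∈ C ∧ e ∈ p.walk.edges) ∧
    (∀ e ∈ C, ∃ p ∈ P, e ∈ p.walk.edges)

/-- The order `≼` on `st`-cuts: the `s`-side of `C` is contained in the
`s`-side of `D` (in a connected graph the `s`-side is unique). -/
def CutLE (G : Multigraph V E) (s t : V) (C D : Set E) : Prop :=
  ∃ X Y : Set V, s ∈ X ∧ t ∉ X ∧ C = G.cut X ∧ s ∈ Y ∧ t ∉ Y ∧ D = G.cut Y ∧ X ⊆ Y

/-- A cut of the form `C_W` for some `st`-wave `W`. -/
def IsWaveCut (G : Multigraph V E) (s t : V) (C : Set E) : Prop :=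
  ∃ W : Set (G.SPath s), G.IsWave s {t} W ∧ G.lastEdges W = C

/-- Deletion of a set of edges. -/
def deleteEdges (G : Multigraph V E) (F : Set E) : Multigraph V {e : E // e ∉ F} where
  inc e := G.inc e.1
  not_isDiag e := G.not_isDiag e.1

open Classical in
/-- Contraction of the vertex set `X` to the vertex `s` (edges inside `X` are
deleted, edges leaving `X` are redirected to `s`). -/
noncomputable def contract (G : Multigraph V E) (X : Set V) (s : V) :
    Multigraph V {e : E // ¬ (Sym2.map (fun v => if v ∈ X then s else v) (G.inc e)).IsDiag} where
  inc e := Sym2.map (fun v => if v ∈ X then s else v) (G.inc e.1)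
  not_isDiag e := e.2

/-- Reachability inside a set `S` of vertices. -/
def ReachableIn (G : Multigraph V E) (S : Set V) (x y : V) : Prop :=
  ∃ p : G.Walk x y, ∀ z ∈ p.support, z ∈ S

/-- `Y` is (the vertex set of) a connected component of the subgraph of `G`
induced by `S`. -/
def IsComponentOf (G : Multigraph V E) (Y S : Set V) : Prop :=
  Y.Nonempty ∧ Y ⊆ S ∧ ∀ x ∈ Y, ∀ y ∈ S, (G.ReachableIn S x y ↔ y ∈ Y)

/-- A cycle in a multigraph (a closed walk with distinct edges whose
vertices are distinct except that the first one equals the last one). -/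
structure Cycle (G : Multigraph V E) : Type (max u v) where
  base : V
  walk : G.Walk base base
  edges_ne_nil : walk.edges ≠ []
  edges_nodup : walk.edges.Nodup
  support_tail_nodup : walk.support.tail.Nodup

/-- A graph is Eulerian if its edge set can be partitioned into
edge sets of cycles. -/
def IsEulerian (G : Multigraph V E) : Prop :=
  ∃ C : Set G.Cycle,
    (∀ c ∈ C, ∀ d ∈ C, c ≠ d → ∀ e, e ∈ c.walk.edges → e ∉ d.walk.edges) ∧
    ∀ e : E, ∃ c ∈ C, e ∈ c.walk.edges

/-- A `T`-partition: a family `{A t : t ∈ T}` of pairwise disjoint vertex sets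
with `A t ∩ T = {t}`. -/
def IsTPartition (T : Set V) (A : V → Set V) : Prop :=
  (∀ t ∈ T, A t ∩ T = {t}) ∧
  ∀ t₁ ∈ T, ∀ t₂ ∈ T, t₁ ≠ t₂ → Disjoint (A t₁) (A t₂)

end Multigraph

/-!
Call a system `R` admissible if it is edge-disjoint and contains, for every path of `P`, a path
with the same first edge. Measure an `st`-path by the position from which it runs along a single
path of `Q` to `t`. By Zorn's lemma some admissible system cannot be improved, where improving
means adding paths or replacing paths by paths with the same first edge and smaller measure;
chains are bounded because measures are natural numbers, so for every first edge the path of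
least measure in the chain survives. A maximal `R` uses every last edge of `Q`. Otherwise let the
last edge of `q ∈ Q` be unused. If `q` avoids `R`, add it. Else let `e` be the last edge of `q`
used by some `r ∈ R`, follow `r` to `e` and then `q` to `t`, and shortcut to a path. This keeps
the first edge of `r` and lowers its measure: the new path runs along `q` from `e` on, whereas a
final segment of `r` through `e` lying on a path of `Q` would lie on `q`, so `r` would use the
last edge of `q`.
-/

section Improves

variable {α κ : Type*} (key : α → κ) (μ : α → ℕ)

def Improves (X Y : Set α) : Prop :=
  ∀ a ∈ X, ∃ b ∈ Y, key b = key a ∧ (b = a ∨ μ b < μ a)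

variable {key μ} {X Y Z : Set α}

lemma improves_of_subset (h : X ⊆ Y) : Improves key μ X Y :=
  fun a ha => ⟨a, h ha, rfl, Or.inl rfl⟩

lemma Improves.trans (h₁ : Improves key μ X Y) (h₂ : Improves key μ Y Z) :
    Improves key μ X Z := by
  intro a ha
  obtain ⟨b, hb, hab, hb'⟩ := h₁ a ha
  obtain ⟨c, hc, hbc, hc'⟩ := h₂ b hb
  refine ⟨c, hc, hbc.trans hab, ?_⟩
  rcases hb' with rfl | hb' <;> rcases hc' with rfl | hc'
  exacts [Or.inl rfl, Or.inr hc', Or.inr hb', Or.inr (hc'.trans hb')]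

lemma Improves.exists_key_eq (h : Improves key μ X Y) {a : α} (ha : a ∈ X) :
    ∃ b ∈ Y, key b = key a :=
  (h a ha).imp fun _ hb => ⟨hb.1, hb.2.1⟩

lemma improves_insert_diff {a b : α} (hab : key a = key b) (hμ : μ a < μ b) :
    Improves key μ X (insert a (X \ {b})) := by
  intro c hc
  by_cases hcb : c = b
  · exact ⟨a, Set.mem_insert _ _, hcb ▸ hab, Or.inr (hcb ▸ hμ)⟩
  · exact ⟨c, Set.mem_insert_of_mem _ ⟨hc, hcb⟩, rfl, Or.inl rfl⟩

lemma not_improves_of_mem {a : α} (ha : a ∈ Y)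
    (h : ∀ b ∈ X, key b = key a → b ≠ a ∧ μ a ≤ μ b) : ¬ Improves key μ Y X := by
  intro hYX
  obtain ⟨b, hb, hba, hb'⟩ := hYX a ha
  obtain ⟨hne, hle⟩ := h b hb hba
  exact hb'.elim hne (Nat.not_lt.mpr hle)

variable (key μ)

def chainBound (c : Set (Set α)) : Set α :=
  {a | (∃ X ∈ c, a ∈ X) ∧ ∀ X ∈ c, ∀ b ∈ X, key b = key a → μ a ≤ μ b}

variable {key μ} {c : Set (Set α)}

lemma improves_chainBound (hX : X ∈ c) : Improves key μ X (chainBound key μ c) := by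
  intro a ha
  let S := {b | (∃ Y ∈ c, b ∈ Y) ∧ key b = key a}
  obtain ⟨b, ⟨hbc, hba⟩, hmin⟩ :=
    (measure μ).wf.has_min S ⟨a, ⟨X, hX, ha⟩, rfl⟩
  have hb_min : ∀ Y ∈ c, ∀ d ∈ Y, key d = key b → μ b ≤ μ d :=
    fun Y hY d hd hdb => Nat.not_lt.mp (hmin d ⟨⟨Y, hY, hd⟩, hdb.trans hba⟩)
  rcases (Nat.lt_or_ge (μ b) (μ a)) with hlt | hge
  · exact ⟨b, ⟨hbc, hb_min⟩, hba, Or.inr hlt⟩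
  · refine ⟨a, ⟨⟨X, hX, ha⟩, fun Y hY d hd hda => ?_⟩, rfl, Or.inl rfl⟩
    exact hge.trans (hb_min Y hY d hd (hda.trans hba.symm))

lemma IsChain.exists_mem_of_mem_chainBound (hc : IsChain (Improves key μ) c) {a b : α}
    (ha : a ∈ chainBound key μ c) (hb : b ∈ chainBound key μ c) :
    ∃ X ∈ c, a ∈ X ∧ b ∈ X := by
  have persist : ∀ {d : α}, d ∈ chainBound key μ c → ∀ X ∈ c, ∀ Y ∈ c, d ∈ X →
      Improves key μ X Y → d ∈ Y := by
    intro d hd X _ Y hY hdX hXY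
    obtain ⟨d', hd', hkey, hd''⟩ := hXY d hdX
    rcases hd'' with rfl | hlt
    · exact hd'
    · exact absurd (hd.2 Y hY d' hd' hkey) (Nat.not_le.mpr hlt)
  obtain ⟨X, hX, haX⟩ := ha.1
  obtain ⟨Y, hY, hbY⟩ := hb.1
  by_cases hXY : X = Y
  · exact ⟨Y, hY, hXY ▸ haX, hbY⟩
  rcases hc hX hY hXY with h | h
  · exact ⟨Y, hY, persist ha X hX Y hY haX h, hbY⟩
  · exact ⟨X, hX, haX, persist hb Y hY X hX hbY h⟩

lemma exists_maximal_improves {S : Set (Set α)} {X₀ : Set α} (hX₀ : X₀ ∈ S)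
    (hS : ∀ c ⊆ S, IsChain (Improves key μ) c → c.Nonempty → chainBound key μ c ∈ S) :
    ∃ M ∈ S, ∀ Y ∈ S, Improves key μ M Y → Improves key μ Y M := by
  have : Nonempty S := ⟨⟨X₀, hX₀⟩⟩
  have bounded (c : Set S) (hc : IsChain (fun X Y : S => Improves key μ X.1 Y.1) c)
      (hne : c.Nonempty) : ∃ U : S, ∀ X ∈ c, Improves key μ X.1 U.1 := by
    refine ⟨⟨chainBound key μ (Subtype.val '' c), hS _ ?_ ?_ (hne.image _)⟩, ?_⟩
    · rintro _ ⟨X, -, rfl⟩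
      exact X.2
    · rintro _ ⟨X, hX, rfl⟩ _ ⟨Y, hY, rfl⟩ hXY
      exact hc hX hY (fun h => hXY (congrArg _ h))
    · exact fun X hX => improves_chainBound ⟨X, hX, rfl⟩
  obtain ⟨⟨M, hM⟩, hmax⟩ := exists_maximal_of_nonempty_chains_bounded bounded Improves.trans
  exact ⟨M, hM, fun Y hY hMY => hmax ⟨Y, hY⟩ hMY⟩

end Improves

namespace Multigraph

variable {V : Type u} {E : Type v} {G : Multigraph V E}

namespace Walk

variable {u v w x y : V} {e f : E}

@[simp] lemma support_nil : (nil v : G.Walk v v).support = [v] := rfl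

@[simp] lemma support_cons (he : G.inc e = s(u, v)) (p : G.Walk v w) :
    (cons e he p).support = u :: p.support := rfl

@[simp] lemma edges_nil : (nil v : G.Walk v v).edges = [] := rfl

@[simp] lemma edges_cons (he : G.inc e = s(u, v)) (p : G.Walk v w) :
    (cons e he p).edges = e :: p.edges := rfl

lemma support_eq_cons : ∀ {u v : V} (p : G.Walk u v), p.support = u :: p.support.tail
  | _, _, .nil _ => rfl
  | _, _, .cons _ _ _ => rfl

@[simp] lemma start_mem_support (p : G.Walk u v) : u ∈ p.support := by
  rw [support_eq_cons]
  exact List.mem_cons_self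

@[simp] lemma end_mem_support : ∀ {u v : V} (p : G.Walk u v), v ∈ p.support
  | _, _, .nil _ => List.mem_singleton_self _
  | _, _, .cons _ _ p => List.mem_cons_of_mem _ (end_mem_support p)

def append : ∀ {u v w : V}, G.Walk u v → G.Walk v w → G.Walk u w
  | _, _, _, .nil _, q => q
  | _, _, _, .cons e he p, q => .cons e he (p.append q)

@[simp] lemma edges_append : ∀ {u v w : V} (p : G.Walk u v) (q : G.Walk v w),
    (p.append q).edges = p.edges ++ q.edges
  | _, _, _, .nil _, _ => rfl
  | _, _, _, .cons e he p, q => by simp [append, edges_append p q]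

@[simp] lemma support_append : ∀ {u v w : V} (p : G.Walk u v) (q : G.Walk v w),
    (p.append q).support = p.support ++ q.support.tail
  | _, _, _, .nil _, q => support_eq_cons q
  | _, _, _, .cons e he p, q => by simp [append, support_append p q]

lemma mem_support_of_mem_edges : ∀ {u v : V} (p : G.Walk u v),
    e ∈ p.edges → x ∈ G.inc e → x ∈ p.support
  | _, _, .nil _, he, _ => by simp at he
  | _, _, .cons e' he' p, he, hx => by
    rcases List.mem_cons.mp he with rfl | he
    · rw [he', Sym2.mem_iff] at hx
      rcases hx with rfl | rfl <;> simp
    · exact List.mem_cons_of_mem _ (mem_support_of_mem_edges p he hx)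

lemma edges_ne_nil (p : G.Walk u v) (h : u ≠ v) : p.edges ≠ [] := by
  cases p
  exacts [absurd rfl h, List.cons_ne_nil _ _]

lemma edges_eq_nil_of_nodup (p : G.Walk v v) (hp : p.support.Nodup) : p.edges = [] := by
  cases p with
  | nil => rfl
  | cons e he p => exact absurd (end_mem_support p) (List.nodup_cons.mp hp).1

lemma head?_edges_eq_of_start_mem (p : G.Walk u v) (hp : p.support.Nodup)
    (he : e ∈ p.edges) (hu : u ∈ G.inc e) : p.edges.head? = some e := by
  cases p with
  | nil => simp at he
  | cons e' he' p =>
    rcases List.mem_cons.mp he with rfl | he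
    · rfl
    · exact absurd (mem_support_of_mem_edges p he hu) (List.nodup_cons.mp hp).1

lemma eq_of_end_mem_inc : ∀ {u : V} (p : G.Walk u v), p.support.Nodup →
    e ∈ p.edges → f ∈ p.edges → v ∈ G.inc e → v ∈ G.inc f → e = f
  | _, .nil _, _, he, _, _, _ => by simp at he
  | u, .cons e' he' p, hp, he, hf, hve, hvf => by
    rw [support_cons, List.nodup_cons] at hp
    have hp_nil : v ∈ G.inc e' → p.edges = [] := by
      intro hv
      rw [he', Sym2.mem_iff] at hv
      rcases hv with rfl | rfl
      · exact absurd (end_mem_support p) hp.1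
      · exact edges_eq_nil_of_nodup p hp.2
    rcases List.mem_cons.mp he with rfl | hep
    · rcases List.mem_cons.mp hf with rfl | hfp
      · rfl
      · simp [hp_nil hve] at hfp
    · rcases List.mem_cons.mp hf with rfl | hfp
      · simp [hp_nil hvf] at hep
      · exact eq_of_end_mem_inc p hp.2 hep hfp hve hvf

lemma exists_mem_edges_end_mem_inc : ∀ {u v w : V} {e : E} (he : G.inc e = s(u, v))
    (p : G.Walk v w), ∃ f ∈ (cons e he p).edges, w ∈ G.inc f
  | _, _, _, e, he, .nil _ => ⟨e, List.mem_cons_self, by simp [he]⟩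
  | _, _, _, _, _, .cons e' he' p => by
    obtain ⟨f, hf, hwf⟩ := exists_mem_edges_end_mem_inc he' p
    exact ⟨f, List.mem_cons_of_mem _ hf, hwf⟩

lemma exists_eq_append_cons_of_mem (S : Set E) : ∀ {u w : V} (p : G.Walk u w),
    (∃ e ∈ p.edges, e ∈ S) → ∃ (x y : V) (e : E) (he : G.inc e = s(x, y))
      (p₁ : G.Walk u x) (p₂ : G.Walk y w),
      p = p₁.append (cons e he p₂) ∧ e ∈ S ∧ ∀ d ∈ p₂.edges, d ∉ S
  | _, _, .nil _, h => by simp at h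
  | _, _, .cons e' he' p, h => by
    by_cases hp : ∃ e ∈ p.edges, e ∈ S
    · obtain ⟨x, y, e, he, p₁, p₂, rfl, heS, hp₂⟩ := exists_eq_append_cons_of_mem S p hp
      exact ⟨x, y, e, he, cons e' he' p₁, p₂, rfl, heS, hp₂⟩
    · obtain ⟨e, he, heS⟩ := h
      rcases List.mem_cons.mp he with rfl | he
      · exact ⟨_, _, e, he', nil _, p, rfl, heS, fun d hd hdS => hp ⟨d, hd, hdS⟩⟩
      · exact absurd ⟨e, he, heS⟩ hp

lemma exists_suffix : ∀ {u w : V} (p : G.Walk u w), x ∈ p.support →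
    ∃ p' : G.Walk x w, p'.edges <:+ p.edges ∧ p'.support <:+ p.support
  | _, _, .nil _, hx => by
    obtain rfl := List.mem_singleton.mp hx
    exact ⟨nil _, List.suffix_refl _, List.suffix_refl _⟩
  | _, _, .cons e he p, hx => by
    rcases List.mem_cons.mp hx with rfl | hx
    · exact ⟨cons e he p, List.suffix_refl _, List.suffix_refl _⟩
    · obtain ⟨p', hE, hS⟩ := exists_suffix p hx
      exact ⟨p', hE.trans (List.suffix_cons _ _), hS.trans (List.suffix_cons _ _)⟩

/-- Follow `a` until it first meets `b`, then follow `b`. -/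
lemma exists_path_of_append : ∀ {u v w : V} (a : G.Walk u v) (b : G.Walk v w),
    a.support.Nodup → b.support.Nodup → ∃ c : G.Walk u w, c.support.Nodup ∧
      (∀ z ∈ c.support, z ∈ a.support ∨ z ∈ b.support) ∧
      ∃ A B, c.edges = A ++ B ∧ A <+: a.edges ∧ B <:+ b.edges ∧ (u ∉ b.support → A ≠ [])
  | _, _, _, .nil _, b, _, hb =>
    ⟨b, hb, fun z hz => Or.inr hz, [], b.edges, rfl, List.nil_prefix, List.suffix_refl _,
      fun h => absurd (start_mem_support b) h⟩
  | u, _, _, .cons e he a, b, ha, hb => by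
    by_cases hub : u ∈ b.support
    · obtain ⟨c, hE, hS⟩ := exists_suffix b hub
      exact ⟨c, hb.sublist hS.sublist, fun z hz => Or.inr (hS.subset hz), [], c.edges, rfl,
        List.nil_prefix, hE, fun h => absurd hub h⟩
    · rw [support_cons, List.nodup_cons] at ha
      obtain ⟨c, hc, hcS, A, B, hAB, hA, hB, -⟩ := exists_path_of_append a b ha.2 hb
      have huc : u ∉ c.support := fun h => (hcS u h).elim ha.1 hub
      refine ⟨cons e he c, List.nodup_cons.mpr ⟨huc, hc⟩, ?_, e :: A, B, by simp [hAB],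
        List.cons_prefix_cons.mpr ⟨rfl, hA⟩, hB, fun _ => List.cons_ne_nil _ _⟩
      intro z hz
      rcases List.mem_cons.mp hz with rfl | hz
      · exact Or.inl List.mem_cons_self
      · exact (hcS z hz).imp_left (List.mem_cons_of_mem _)

lemma exists_prefix_of_mem_inc (p₁ : G.Walk u x) (he : G.inc e = s(x, y)) (p₂ : G.Walk y w)
    {z : V} (hz : z ∈ G.inc e) : ∃ a : G.Walk u z, a.edges <+: p₁.edges ++ [e] ∧
      a.support <+: (p₁.append (cons e he p₂)).support := by
  have hsupp : (p₁.append (cons e he p₂)).support = p₁.support ++ p₂.support := by simp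
  rw [hsupp]
  rw [he, Sym2.mem_iff] at hz
  rcases hz with rfl | rfl
  · exact ⟨p₁, List.prefix_append _ _, List.prefix_append _ _⟩
  · refine ⟨p₁.append (cons e he (nil z)), by simp, ?_⟩
    rw [support_append, support_cons, support_nil, List.tail_cons]
    exact List.prefix_append_right_inj _ |>.mpr (by rw [support_eq_cons p₂]; simp)

end Walk

variable {s t : V}

namespace STPath

def firstEdge (p : G.STPath s t) : Option E := p.walk.edges.head?

noncomputable def mergeIndex (Q : Set (G.STPath s t)) (p : G.STPath s t) : ℕ :=
  sInf {k | ∃ q ∈ Q, ∀ d ∈ p.walk.edges.drop k, d ∈ q.walk.edges}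

variable {Q : Set (G.STPath s t)} {p q : G.STPath s t}

lemma mergeIndex_le {k : ℕ} (hq : q ∈ Q) (h : ∀ d ∈ p.walk.edges.drop k, d ∈ q.walk.edges) :
    mergeIndex Q p ≤ k :=
  Nat.sInf_le ⟨q, hq, h⟩

lemma mergeIndex_eq_zero (hp : p ∈ Q) : mergeIndex Q p = 0 :=
  Nat.le_zero.mp (mergeIndex_le hp fun _ hd => by simpa using hd)

lemma lt_mergeIndex (hQ : G.STPathDisjoint Q) (hq : q ∈ Q) {x y : V} {e d : E}
    {he : G.inc e = s(x, y)} {p₁ : G.Walk s x} {p₂ : G.Walk y t}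
    (hp : p.walk = p₁.append (.cons e he p₂)) (heq : e ∈ q.walk.edges)
    (hdq : d ∈ q.walk.edges) (hdt : t ∈ G.inc d) (hdp : d ∉ p.walk.edges) :
    p₁.edges.length < mergeIndex Q p := by
  have hne : {k | ∃ q ∈ Q, ∀ d ∈ p.walk.edges.drop k, d ∈ q.walk.edges}.Nonempty :=
    ⟨p.walk.edges.length, q, hq, by simp⟩
  rw [mergeIndex, Nat.lt_iff_add_one_le]
  refine le_csInf hne ?_
  rintro k ⟨q', hq', hk⟩
  by_contra! hlt
  have htail : (Walk.cons e he p₂).edges ⊆ p.walk.edges.drop k := by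
    rw [hp, Walk.edges_append, List.drop_append_of_le_length (by omega)]
    exact List.subset_append_right _ _
  have hq' : q' = q := by
    by_contra hq'q
    exact hQ q' hq' q hq hq'q e (hk e (htail List.mem_cons_self)) heq
  subst hq'
  obtain ⟨f, hf, hft⟩ := Walk.exists_mem_edges_end_mem_inc he p₂
  have hfd : f = d :=
    Walk.eq_of_end_mem_inc q'.walk q'.support_nodup (hk f (htail hf)) hdq hft hdt
  exact hdp (hfd ▸ List.mem_of_mem_drop (htail hf))

lemma exists_reroute {x y x₀ y₀ : V} {e : E}
    {he : G.inc e = s(x, y)} {w₁ : G.Walk s x} {w₂ : G.Walk y t}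
    (hq : q.walk = w₁.append (.cons e he w₂))
    {he₀ : G.inc e = s(x₀, y₀)} {p₁ : G.Walk s x₀} {p₂ : G.Walk y₀ t}
    (hp : p.walk = p₁.append (.cons e he₀ p₂)) :
    ∃ p' : G.STPath s t, p'.firstEdge = p.firstEdge ∧
      (∀ f ∈ p'.walk.edges, f ∈ p.walk.edges ∨ f ∈ w₂.edges) ∧
      ∀ f ∈ p'.walk.edges.drop p₁.edges.length, f ∈ q.walk.edges := by
  have hq_nodup := q.support_nodup
  rw [hq, Walk.support_append, Walk.support_cons, List.tail_cons, List.nodup_append] at hq_nodup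
  have hs : s ∉ w₂.support := fun h => hq_nodup.2.2 s w₁.start_mem_support s h rfl
  obtain ⟨a, haE, haS⟩ := Walk.exists_prefix_of_mem_inc p₁ he₀ p₂ (z := y) (by simp [he])
  have ha : a.support.Nodup := by
    have := p.support_nodup
    rw [hp] at this
    exact this.sublist haS.sublist
  obtain ⟨c, hc, -, A, B, hcAB, hA, hB, hAne⟩ := Walk.exists_path_of_append a w₂ ha hq_nodup.2.1
  have hAp : A <+: p.walk.edges := by
    rw [hp, Walk.edges_append, Walk.edges_cons]
    exact hA.trans (haE.trans (List.prefix_append_right_inj _ |>.mpr (by simp)))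
  refine ⟨⟨c, hc⟩, ?_, ?_, ?_⟩
  · obtain ⟨L, hL⟩ := hAp
    simp only [firstEdge, hcAB, ← hL, List.head?_append_of_ne_nil _ (hAne hs)]
  · intro f hf
    rw [hcAB, List.mem_append] at hf
    exact hf.imp (fun h => hAp.subset h) (fun h => hB.subset h)
  · intro f hf
    rw [hcAB, List.drop_append, List.mem_append] at hf
    rw [hq, Walk.edges_append, Walk.edges_cons]
    rcases hf with hf | hf
    · have hfe : f ∈ (p₁.edges ++ [e]).drop p₁.edges.length := ((hA.trans haE).drop _).subset hf
      rw [List.drop_left, List.mem_singleton] at hfe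
      simp [hfe]
    · simp [hB.subset (List.mem_of_mem_drop hf)]

end STPath

variable {P Q R R' : Set (G.STPath s t)}

open STPath

lemma STPathDisjoint.mono (hR : G.STPathDisjoint R) (h : R' ⊆ R) : G.STPathDisjoint R' :=
  fun p hp q hq => hR p (h hp) q (h hq)

lemma STPathDisjoint.insert (hR : G.STPathDisjoint R) {p : G.STPath s t}
    (hp : ∀ r ∈ R, r ≠ p → ∀ e ∈ p.walk.edges, e ∉ r.walk.edges) :
    G.STPathDisjoint (insert p R) := by
  rintro a (rfl | ha) b (rfl | hb) hab e hea
  · exact absurd rfl hab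
  · exact hp b hb (Ne.symm hab) e hea
  · exact fun heb => hp a ha hab e heb hea
  · exact hR a ha b hb hab e hea

lemma STPathDisjoint.injOn_firstEdge (hst : s ≠ t) (hR : G.STPathDisjoint R) :
    Set.InjOn firstEdge R := by
  intro p hp q hq hpq
  by_contra hne
  obtain ⟨e, L, hL⟩ := List.exists_cons_of_ne_nil (p.walk.edges_ne_nil hst)
  have hqe : q.walk.edges.head? = some e := by
    rw [← firstEdge, ← hpq, firstEdge, hL, List.head?_cons]
  exact hR p hp q hq hne e (by simp [hL]) (List.mem_of_mem_head? hqe)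

def KeepsFirstEdges (P R : Set (G.STPath s t)) : Prop :=
  G.STPathDisjoint R ∧ ∀ p ∈ P, ∃ r ∈ R, r.firstEdge = p.firstEdge

lemma KeepsFirstEdges.of_improves {μ : G.STPath s t → ℕ} (hR : KeepsFirstEdges P R)
    (hR' : G.STPathDisjoint R') (h : Improves firstEdge μ R R') : KeepsFirstEdges P R' := by
  refine ⟨hR', fun p hp => ?_⟩
  obtain ⟨r, hr, hrp⟩ := hR.2 p hp
  obtain ⟨r', hr', hr'r⟩ := h.exists_key_eq hr
  exact ⟨r', hr', hr'r.trans hrp⟩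

lemma exists_maximal_keepsFirstEdges (hP : G.STPathDisjoint P) (μ : G.STPath s t → ℕ) :
    ∃ M, KeepsFirstEdges P M ∧
      ∀ R, KeepsFirstEdges P R → Improves firstEdge μ M R → Improves firstEdge μ R M := by
  refine exists_maximal_improves (S := {R | KeepsFirstEdges P R})
    (X₀ := P) ⟨hP, fun p hp => ⟨p, hp, rfl⟩⟩ fun c hcS hc ⟨X, hX⟩ => ?_
  have hdisj : G.STPathDisjoint (chainBound firstEdge μ c) := by
    intro a ha b hb hab
    obtain ⟨Y, hY, haY, hbY⟩ := hc.exists_mem_of_mem_chainBound ha hb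
    exact (hcS hY).1 a haY b hbY hab
  exact (hcS hX).of_improves hdisj (improves_chainBound hX)

lemma KeepsFirstEdges.insert_of_edgeDisjoint (hR : KeepsFirstEdges P R) {q : G.STPath s t}
    (hq : ∀ f ∈ q.walk.edges, ∀ r ∈ R, f ∉ r.walk.edges) : KeepsFirstEdges P (insert q R) :=
  hR.of_improves (μ := fun _ => 0) (hR.1.insert fun r hr _ f hf => hq f hf r hr)
    (improves_of_subset (Set.subset_insert q R))

lemma KeepsFirstEdges.replace (hR : KeepsFirstEdges P R) {r r' : G.STPath s t} (hr : r ∈ R)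
    (hfe : r'.firstEdge = r.firstEdge)
    (hr' : ∀ f ∈ r'.walk.edges, f ∈ r.walk.edges ∨ ∀ b ∈ R, f ∉ b.walk.edges) :
    KeepsFirstEdges P (insert r' (R \ {r})) := by
  refine ⟨(hR.1.mono Set.sdiff_subset).insert fun b hb _ f hf hfb => ?_, fun p hp => ?_⟩
  · rcases hr' f hf with hfr | hfR
    · exact hR.1 r hr b hb.1 (Ne.symm hb.2) f hfr hfb
    · exact hfR b hb.1 hfb
  · obtain ⟨b, hb, hbp⟩ := hR.2 p hp
    by_cases hbr : b = r
    · exact ⟨r', Set.mem_insert _ _, hfe.trans (hbr ▸ hbp)⟩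
    · exact ⟨b, Set.mem_insert_of_mem _ ⟨hb, hbr⟩, hbp⟩

lemma KeepsFirstEdges.exists_strict_improvement (hst : s ≠ t) (hQ : G.STPathDisjoint Q)
    (hR : KeepsFirstEdges P R) {q : G.STPath s t} (hq : q ∈ Q) {d : E}
    (hdq : d ∈ q.walk.edges) (hdt : t ∈ G.inc d) (hdR : ∀ r ∈ R, d ∉ r.walk.edges) :
    ∃ R', KeepsFirstEdges P R' ∧ Improves firstEdge (mergeIndex Q) R R' ∧
      ¬ Improves firstEdge (mergeIndex Q) R' R := by
  by_cases hmeet : ∃ e ∈ q.walk.edges, e ∈ {e | ∃ r ∈ R, e ∈ r.walk.edges}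
  · obtain ⟨x, y, e, he, w₁, w₂, hqw, ⟨r, hrR, her⟩, hw₂⟩ :=
      Walk.exists_eq_append_cons_of_mem _ q.walk hmeet
    obtain ⟨x₀, y₀, e', he₀, p₁, p₂, hrw, rfl, -⟩ :=
      Walk.exists_eq_append_cons_of_mem {e} r.walk ⟨e, her, rfl⟩
    obtain ⟨r', hfe, hr'E, hr'Q⟩ := exists_reroute hqw hrw
    have hlt : mergeIndex Q r' < mergeIndex Q r :=
      (mergeIndex_le hq hr'Q).trans_lt
        (lt_mergeIndex hQ hq hrw (by simp [hqw]) hdq hdt (hdR r hrR))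
    refine ⟨_, hR.replace hrR hfe fun f hf => ?_, improves_insert_diff hfe hlt,
      not_improves_of_mem (Set.mem_insert _ _) fun b hb hbr' => ?_⟩
    · exact (hr'E f hf).imp_right fun hfw b hb hfb => hw₂ f hfw ⟨b, hb, hfb⟩
    · obtain rfl : b = r := hR.1.injOn_firstEdge hst hb hrR (hbr'.trans hfe)
      exact ⟨fun h => (h ▸ hlt).false, hlt.le⟩
  · refine ⟨_, hR.insert_of_edgeDisjoint fun f hf r hr hfr => hmeet ⟨f, hf, r, hr, hfr⟩,
      improves_of_subset (Set.subset_insert q R),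
      not_improves_of_mem (Set.mem_insert _ _) fun b hb _ => ?_⟩
    exact ⟨fun h => hdR b hb (h ▸ hdq), by simp [mergeIndex_eq_zero hq]⟩

end Multigraph

/-- **Diestel–Thomassen theorem.** Given two systems `P`, `Q` of pairwise
edge-disjoint `st`-paths there is a system `R` of pairwise edge-disjoint
`st`-paths with `δ_R(s) ⊇ δ_P(s)` and `δ_R(t) ⊇ δ_Q(t)`. -/
theorem diestel_thomassen {V : Type u} {E : Type v} (G : Multigraph V E)
    (s t : V) (hst : s ≠ t) (P Q : Set (G.STPath s t))
    (hP : G.STPathDisjoint P) (hQ : G.STPathDisjoint Q) :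
    ∃ R : Set (G.STPath s t), G.STPathDisjoint R ∧
      (∀ e ∈ G.inci s, (∃ p ∈ P, e ∈ p.walk.edges) → ∃ r ∈ R, e ∈ r.walk.edges) ∧
      (∀ e ∈ G.inci t, (∃ q ∈ Q, e ∈ q.walk.edges) → ∃ r ∈ R, e ∈ r.walk.edges) := by
  obtain ⟨M, hM, hmax⟩ :=
    Multigraph.exists_maximal_keepsFirstEdges hP (Multigraph.STPath.mergeIndex Q)
  refine ⟨M, hM.1, ?_, ?_⟩
  · rintro e hes ⟨p, hp, hep⟩
    obtain ⟨r, hr, hrp⟩ := hM.2 p hp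
    refine ⟨r, hr, List.mem_of_mem_head? (?_ : r.walk.edges.head? = some e)⟩
    rw [← p.walk.head?_edges_eq_of_start_mem p.support_nodup hep hes]
    exact hrp
  · rintro e het ⟨q, hq, heq⟩
    by_contra! hmiss
    obtain ⟨R, hR, hMR, hRM⟩ := hM.exists_strict_improvement hst hQ hq heq het hmiss
    exact hRM (hmax R hR hMR)
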